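/- Let y₁, y₂ > 0 be real numbers satisfying 27·y₁⁴·y₂⁴ − 18·y₁²·y₂² + 4·y₁² + 4·y₂² > 1 and y₁² + y₂² < 1. Then the set {(x₁,x₂) ∈ ℝ² : C(x₁,x₂) = 0 and E(x₁,x₂) = 0} has exactly 2 elements. -/

import Mathlib

/-!
With `s = x₁ + x₂`, `d = x₁ - x₂`, `a = y₁²`, `b = y₂²` the fiber equations become
`3 s² + d² = 12 (1 - a - b)` and `d (2 s² - a - b - 2) + 9 s (a - b) = 0`. Eliminating `d`,
`t = s²` is a root of a cubic whose discriminant is `-186624 (a - b)² L(a, b)`, with `L > 0`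
exactly on the light zone. So off the diagonal the cubic has a single real root; on the diagonal
it factors and only one root is compatible with `d² ≥ 0`. In both cases `s` is determined up to
sign and then `d` by the second equation, while the intermediate value theorem on
`[0, 4 (1 - a - b)]` produces a solution. The fiber is therefore `{p, -p}` with `p ≠ 0`.
-/

open Polynomial

namespace Cubic

/-- With the third root `t₃ = -P.b / P.a - t₁ - t₂`, `2 P.a t₁ + P.a t₂ + P.b = P.a (t₁ - t₃)`:
this is `P.a⁴ ∏ (tᵢ - tⱼ)²` with the division cleared. -/
theorem discr_eq_sq_of_eval_eq_zero {R : Type*} [CommRing R] [IsDomain R] {P : Cubic R}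
    {t₁ t₂ : R} (h₁ : P.toPoly.eval t₁ = 0) (h₂ : P.toPoly.eval t₂ = 0) (hne : t₁ ≠ t₂) :
    P.discr =
      ((t₁ - t₂) * (2 * P.a * t₁ + P.a * t₂ + P.b) * (P.a * t₁ + 2 * P.a * t₂ + P.b)) ^ 2 := by
  obtain ⟨α, β, γ, δ⟩ := P
  simp only [toPoly, eval_add, eval_mul, eval_C, eval_pow, eval_X] at h₁ h₂
  have hγ : γ = -(α * (t₁ ^ 2 + t₁ * t₂ + t₂ ^ 2) + β * (t₁ + t₂)) := by
    have h : (t₁ - t₂) * (α * (t₁ ^ 2 + t₁ * t₂ + t₂ ^ 2) + β * (t₁ + t₂) + γ) = 0 := by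
      linear_combination h₁ - h₂
    linear_combination (mul_eq_zero.mp h).resolve_left (sub_ne_zero_of_ne hne)
  subst hγ
  have hδ : δ = -(α * t₁ ^ 3 + β * t₁ ^ 2
      - (α * (t₁ ^ 2 + t₁ * t₂ + t₂ ^ 2) + β * (t₁ + t₂)) * t₁) := by
    linear_combination h₁
  subst hδ
  simp only [discr]
  ring

theorem eq_of_eval_eq_zero_of_discr_neg {R : Type*} [CommRing R] [LinearOrder R]
    [IsStrictOrderedRing R] {P : Cubic R} (hP : P.discr < 0) {t₁ t₂ : R}
    (h₁ : P.toPoly.eval t₁ = 0) (h₂ : P.toPoly.eval t₂ = 0) : t₁ = t₂ := by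
  by_contra hne
  rw [discr_eq_sq_of_eval_eq_zero h₁ h₂ hne] at hP
  exact (sq_nonneg _).not_gt hP

end Cubic

/-- The fiber over `(y₁, y₂)`, written in `a = y₁ ^ 2` and `b = y₂ ^ 2`. -/
def lagrangianFiber (a b : ℝ) : Set (ℝ × ℝ) :=
  {p | p.1^2 + p.1 * p.2 + p.2^2 - 3 * (1 - a - b) = 0 ∧
    2 * p.1^3 + 3 * p.1^2 * p.2 + 9 * p.1 * a + 18 * p.2 * a
      - 2 * p.2^3 - 3 * p.1 * p.2^2 - 9 * p.2 * b - 18 * p.1 * b = 0}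

/-- In `a = y₁ ^ 2`, `b = y₂ ^ 2`, the light zone `𝖫₂` is `0 < lightZonePoly a b ∧ a + b < 1`. -/
def lightZonePoly (a b : ℝ) : ℝ := 27 * a^2 * b^2 - 18 * a * b + 4 * a + 4 * b - 1

/-- Eliminating `x₁ - x₂` from the fiber equations leaves this cubic in `t = (x₁ + x₂)²`,
namely `(4 (1 - a - b) - t) (2 t - a - b - 2)² - 27 t (a - b)²`. -/
def fiberCubic (a b : ℝ) : Cubic ℝ :=
  ⟨-4, 24 - 12 * a - 12 * b,
    -(16 * (1 - a - b) * (a + b + 2) + (a + b + 2)^2 + 27 * (a - b)^2),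
    4 * (1 - a - b) * (a + b + 2)^2⟩

section

variable {a b : ℝ}

theorem one_third_lt_of_lightZonePoly_pos (ha : 0 < a) (h : 0 < lightZonePoly a a) :
    1/3 < a := by
  have h3 : 0 < (3 * a - 1)^3 := by
    have : lightZonePoly a a = (3 * a - 1)^3 * (a + 1) := by unfold lightZonePoly; ring
    exact pos_of_mul_pos_left (this ▸ h) (by linarith)
  have := (Odd.pow_pos_iff (by decide : Odd 3)).mp h3
  linarith

theorem fiberCubic_eval (t : ℝ) : (fiberCubic a b).toPoly.eval t =
    (4 * (1 - a - b) - t) * (2 * t - a - b - 2)^2 - 27 * t * (a - b)^2 := by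
  simp only [fiberCubic, Cubic.toPoly, eval_add, eval_mul, eval_C, eval_pow, eval_X]
  ring

theorem fiberCubic_discr :
    (fiberCubic a b).discr = -186624 * (a - b)^2 * lightZonePoly a b := by
  simp only [Cubic.discr, fiberCubic, lightZonePoly]
  ring

theorem mem_lagrangianFiber_iff {p : ℝ × ℝ} : p ∈ lagrangianFiber a b ↔
    3 * (p.1 + p.2)^2 + (p.1 - p.2)^2 = 12 * (1 - a - b) ∧
    (p.1 - p.2) * (2 * (p.1 + p.2)^2 - a - b - 2) + 9 * (p.1 + p.2) * (a - b) = 0 := by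
  constructor
  · rintro ⟨hC, hE⟩
    exact ⟨by linear_combination 4 * hC,
      by linear_combination (2/3) * hE + (2/3) * (p.1 - p.2) * hC⟩
  · rintro ⟨hC, hE⟩
    exact ⟨by linear_combination (1/4) * hC,
      by linear_combination (3/2) * hE - (1/4) * (p.1 - p.2) * hC⟩

theorem neg_mem_lagrangianFiber {p : ℝ × ℝ} (hp : p ∈ lagrangianFiber a b) :
    -p ∈ lagrangianFiber a b := by
  obtain ⟨hC, hE⟩ := hp
  exact ⟨by simp only [Prod.fst_neg, Prod.snd_neg]; linear_combination hC,
    by simp only [Prod.fst_neg, Prod.snd_neg]; linear_combination -hE⟩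

theorem fiberCubic_eval_sq_add {p : ℝ × ℝ} (hp : p ∈ lagrangianFiber a b) :
    (fiberCubic a b).toPoly.eval ((p.1 + p.2)^2) = 0 := by
  obtain ⟨hC, hE⟩ := mem_lagrangianFiber_iff.mp hp
  rw [fiberCubic_eval]
  linear_combination (-(1/3)) * (2 * (p.1 + p.2)^2 - a - b - 2)^2 * hC
    + (1/3) * ((p.1 - p.2) * (2 * (p.1 + p.2)^2 - a - b - 2) - 9 * (p.1 + p.2) * (a - b)) * hE

theorem two_mul_sq_add_sub_ne_zero (ha : 0 < a) (hb : 0 < b) (hL : 0 < lightZonePoly a b)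
    {p : ℝ × ℝ} (hp : p ∈ lagrangianFiber a b) : 2 * (p.1 + p.2)^2 - a - b - 2 ≠ 0 := by
  obtain ⟨hC, hE⟩ := mem_lagrangianFiber_iff.mp hp
  intro h0
  have hs : p.1 + p.2 ≠ 0 := by
    rintro hs
    rw [hs] at h0
    linarith
  have hab : a = b := by
    have : 9 * (p.1 + p.2) * (a - b) = 0 := by linear_combination hE - (p.1 - p.2) * h0
    linarith [(mul_eq_zero.mp this).resolve_left (mul_ne_zero (by norm_num) hs)]
  subst hab
  have := one_third_lt_of_lightZonePoly_pos ha hL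
  nlinarith [sq_nonneg (p.1 - p.2)]

theorem sq_add_eq_of_mem_lagrangianFiber (ha : 0 < a) (hb : 0 < b)
    (hL : 0 < lightZonePoly a b) {p q : ℝ × ℝ} (hp : p ∈ lagrangianFiber a b)
    (hq : q ∈ lagrangianFiber a b) : (p.1 + p.2)^2 = (q.1 + q.2)^2 := by
  rcases eq_or_ne a b with rfl | hab
  · -- on the diagonal the cubic is `(4 (1 - 2a) - t) (2 t - 2a - 2)²`
    have eq_four_mul {x : ℝ × ℝ} (hx : x ∈ lagrangianFiber a a) :
        (x.1 + x.2)^2 = 4 * (1 - a - a) := by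
      have h := fiberCubic_eval_sq_add hx
      rw [fiberCubic_eval, sub_self, sq (0 : ℝ), mul_zero, mul_zero, sub_zero] at h
      linarith [(mul_eq_zero.mp h).resolve_right
        (pow_ne_zero 2 (two_mul_sq_add_sub_ne_zero ha ha hL hx))]
    rw [eq_four_mul hp, eq_four_mul hq]
  · refine Cubic.eq_of_eval_eq_zero_of_discr_neg ?_ (fiberCubic_eval_sq_add hp)
      (fiberCubic_eval_sq_add hq)
    rw [fiberCubic_discr]
    have := sq_pos_of_ne_zero (sub_ne_zero_of_ne hab)
    nlinarith

theorem eq_of_mem_lagrangianFiber_of_add_eq (ha : 0 < a) (hb : 0 < b)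
    (hL : 0 < lightZonePoly a b) {p q : ℝ × ℝ} (hp : p ∈ lagrangianFiber a b)
    (hq : q ∈ lagrangianFiber a b) (hs : p.1 + p.2 = q.1 + q.2) : p = q := by
  have hpE := (mem_lagrangianFiber_iff.mp hp).2
  have hqE := (mem_lagrangianFiber_iff.mp hq).2
  have hd : p.1 - p.2 = q.1 - q.2 := by
    rw [hs] at hpE
    refine mul_right_cancel₀ (hs ▸ two_mul_sq_add_sub_ne_zero ha hb hL hp) ?_
    linear_combination hpE - hqE
  exact Prod.ext (by linarith) (by linarith)

theorem lagrangianFiber_nonempty (ha : 0 < a) (hb : 0 < b) (hL : 0 < lightZonePoly a b)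
    (hab : a + b < 1) : (lagrangianFiber a b).Nonempty := by
  have hr : 0 ≤ 4 * (1 - a - b) := by linarith
  obtain ⟨t, ⟨ht₀, ht⟩, hft⟩ :
      0 ∈ (fun t ↦ (fiberCubic a b).toPoly.eval t) '' Set.Icc 0 (4 * (1 - a - b)) := by
    refine intermediate_value_Icc' hr (fiberCubic a b).toPoly.continuousOn ⟨?_, ?_⟩
    · simp only [fiberCubic_eval]
      nlinarith [sq_nonneg (a - b)]
    · simp only [fiberCubic_eval]
      nlinarith [sq_nonneg (a + b + 2)]
  simp only [fiberCubic_eval] at hft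
  have hk : 2 * t - a - b - 2 ≠ 0 := by
    intro h0
    have hab' : a = b := by
      have : 27 * t * (a - b)^2 = 0 := by
        linear_combination (4 * (1 - a - b) - t) * (2 * t - a - b - 2) * h0 - hft
      have ht : 27 * t ≠ 0 := by intro h; linarith
      linarith [pow_eq_zero_iff two_ne_zero |>.mp ((mul_eq_zero.mp this).resolve_left ht)]
    subst hab'
    linarith [one_third_lt_of_lightZonePoly_pos ha hL]
  set s := Real.sqrt t
  have hs : s^2 = t := Real.sq_sqrt ht₀
  set d := -9 * s * (a - b) / (2 * t - a - b - 2)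
  have hdk : d * (2 * t - a - b - 2) = -9 * s * (a - b) := div_mul_cancel₀ _ hk
  have hd : d^2 = 3 * (4 * (1 - a - b) - t) := by
    refine mul_right_cancel₀ (pow_ne_zero 2 hk) ?_
    linear_combination (d * (2 * t - a - b - 2) - 9 * s * (a - b)) * hdk
      + 81 * (a - b)^2 * hs - 3 * hft
  refine ⟨((s + d) / 2, (s - d) / 2), mem_lagrangianFiber_iff.mpr ⟨?_, ?_⟩⟩
  · linear_combination 3 * hs + hd
  · linear_combination hdk + 2 * d * hs

theorem ncard_lagrangianFiber (ha : 0 < a) (hb : 0 < b) (hL : 0 < lightZonePoly a b)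
    (hab : a + b < 1) : (lagrangianFiber a b).ncard = 2 := by
  obtain ⟨p, hp⟩ := lagrangianFiber_nonempty ha hb hL hab
  have hp_ne : p ≠ -p := by
    intro h
    have h₁ : p.1 = -p.1 := congrArg Prod.fst h
    have h₂ : p.2 = -p.2 := congrArg Prod.snd h
    have hC : p.1^2 + p.1 * p.2 + p.2^2 - 3 * (1 - a - b) = 0 := hp.1
    rw [show p.1 = 0 by linarith, show p.2 = 0 by linarith] at hC
    linarith
  suffices lagrangianFiber a b = {p, -p} by rw [this, Set.ncard_pair hp_ne]
  ext q
  refine ⟨fun hq ↦ ?_, ?_⟩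
  · rcases sq_eq_sq_iff_eq_or_eq_neg.mp (sq_add_eq_of_mem_lagrangianFiber ha hb hL hq hp)
      with h | h
    · exact Or.inl (eq_of_mem_lagrangianFiber_of_add_eq ha hb hL hq hp h)
    · refine Or.inr (eq_of_mem_lagrangianFiber_of_add_eq ha hb hL hq
        (neg_mem_lagrangianFiber hp) ?_)
      simp only [Prod.fst_neg, Prod.snd_neg]
      linarith
  · rintro (rfl | rfl)
    exacts [hp, neg_mem_lagrangianFiber hp]

end

/-- In the outer light zone 𝖫₂, the fiber has exactly 2 elements. -/
theorem stmt_1 (y₁ y₂ : ℝ) (hy₁ : 0 < y₁) (hy₂ : 0 < y₂)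
    (h : 1 < 27 * y₁^4 * y₂^4 - 18 * y₁^2 * y₂^2 + 4 * y₁^2 + 4 * y₂^2)
    (h' : y₁^2 + y₂^2 < 1) :
    ({p : ℝ × ℝ |
        p.1^2 + p.1 * p.2 + p.2^2 - 3 * (1 - y₁^2 - y₂^2) = 0 ∧
        2 * p.1^3 + 3 * p.1^2 * p.2 + 9 * p.1 * y₁^2 + 18 * p.2 * y₁^2
          - 2 * p.2^3 - 3 * p.1 * p.2^2 - 9 * p.2 * y₂^2 - 18 * p.1 * y₂^2 = 0}).ncard
      = 2 := by
  have hL : lightZonePoly (y₁^2) (y₂^2)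
      = 27 * y₁^4 * y₂^4 - 18 * y₁^2 * y₂^2 + 4 * y₁^2 + 4 * y₂^2 - 1 := by
    unfold lightZonePoly; ring
  exact ncard_lagrangianFiber (by positivity) (by positivity) (by linarith) h'
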